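/- Let M be a pointed metric space, let γ ∈ (0,1], let A be a subset of M̃, and let u,v ∈ M with u ≠ v. The set A ∪ {(u,v)} is γ-cyclically monotonic if and only if there exists f in the closed unit ball of Lip_0(M) satisfying f(m_{x,y}) ≥ γ for all (x,y) ∈ A, and f(y) − f(x) + γ·d(u,v) ≤ d(x,u) + d(y,v) for all x,y ∈ π(A). -/

import Mathlib

/-- The set `M̃ = {(x,y) : x ≠ y}` as a subtype. -/
def Mt (M : Type*) : Type _ := {p : M × M // p.1 ≠ p.2}

variable {M : Type*} [MetricSpace M]

/-- The de Leeuw quotient `f(m_{x,y}) = (f x - f y)/d(x,y)`. -/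
noncomputable def mQ (f : M → ℝ) (p : Mt M) : ℝ :=
  (f p.1.1 - f p.1.2) / dist p.1.1 p.1.2

/-- `A ⊆ M̃` is `γ`-cyclically monotonic. -/
def GammaCM (γ : ℝ) (A : Set (Mt M)) : Prop :=
  ∀ (n : ℕ) (p : Fin (n + 1) → Mt M), (∀ i, p i ∈ A) →
    0 ≤ ∑ i : Fin (n + 1),
      min (dist (p i).1.1 (p (i + 1)).1.2 - γ * dist (p i).1.1 (p i).1.2)
          (dist (p i).1.2 (p (i + 1)).1.2)

/-- `π(A)`. -/
def piA (A : Set (Mt M)) : Set M := {z | ∃ p ∈ A, p.1.1 = z ∨ p.1.2 = z}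

/-- The pair `(u,v)` as an element of `M̃`. -/
def pr {M : Type*} (u v : M) (h : u ≠ v) : Mt M := ⟨(u, v), h⟩

/-!
Cycle sums telescope: if some `g : M → ℝ` satisfies
`g y - g y' ≤ min (d(x,y') - γ d(x,y)) (d(y,y'))` for all `(x,y), (x',y')` in a set `B`, then `B`
is `γ`-cyclically monotonic. Conversely (Rockafellar), if `B` is `γ`-cyclically monotonic, the
infimum `h` of the costs of chains in `B` issuing from a fixed pair is finite, `1`-Lipschitz and
satisfies `h x + γ d(x,y) ≤ h y` on `B`.

For `B = A ∪ {(u,v)}`, `f = h base - h` then has the required properties, the inequality on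
`π(A)` coming from `h u + γ d(u,v) ≤ h v`. Conversely, the given `f` is already a potential for
`B` away from `v`; at `v` take the least value the links into `v` allow. The inequality on `π(A)`
is exactly what makes this value compatible with the link out of `(u,v)`.
-/

open Finset

/-- The summand of `GammaCM` for the link from `q` to the endpoint `c` of the next pair. -/
noncomputable def linkWeight (γ : ℝ) (q : Mt M) (c : M) : ℝ :=
  min (dist q.1.1 c - γ * dist q.1.1 q.1.2) (dist q.1.2 c)

lemma linkWeight_le_add_dist (γ : ℝ) (q : Mt M) (c c' : M) :
    linkWeight γ q c ≤ linkWeight γ q c' + dist c c' := by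
  rw [linkWeight, linkWeight, ← min_add_add_right]
  gcongr
  · linarith [dist_triangle_right q.1.1 c c']
  · exact dist_triangle_right _ _ _

lemma linkWeight_fst_le (γ : ℝ) (q : Mt M) :
    linkWeight γ q q.1.1 ≤ -(γ * dist q.1.1 q.1.2) := by
  simpa only [linkWeight, dist_self, zero_sub] using min_le_left _ (dist q.1.2 q.1.1)

lemma linkWeight_snd {γ : ℝ} (hγ : γ ≤ 1) (q : Mt M) : linkWeight γ q q.1.2 = 0 := by
  rw [linkWeight, dist_self]
  exact min_eq_right (by nlinarith [dist_nonneg (x := q.1.1) (y := q.1.2)])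

theorem gammaCM_of_sub_le_linkWeight {γ : ℝ} {B : Set (Mt M)} (g : M → ℝ)
    (hg : ∀ q ∈ B, ∀ q' ∈ B, g q.1.2 - g q'.1.2 ≤ linkWeight γ q q'.1.2) :
    GammaCM γ B := by
  intro n p hp
  have telescope : ∑ i : Fin (n + 1), (g (p i).1.2 - g (p (i + 1)).1.2) = 0 := by
    rw [sum_sub_distrib, sub_eq_zero]
    exact (Fintype.sum_equiv (Equiv.addRight 1) _ _ fun _ => rfl).symm
  exact telescope ▸ sum_le_sum fun i _ => hg _ (hp i) _ (hp (i + 1))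

/-- The cost of the chain `P 0, …, P n` of pairs, closed off at the point `z`. -/
noncomputable def chainCost (γ : ℝ) {n : ℕ} (P : Fin (n + 1) → Mt M) (z : M) : ℝ :=
  ∑ i : Fin n, linkWeight γ (P i.castSucc) (P i.succ).1.2 + linkWeight γ (P (Fin.last n)) z

lemma chainCost_le_add_dist (γ : ℝ) {n : ℕ} (P : Fin (n + 1) → Mt M) (z z' : M) :
    chainCost γ P z ≤ chainCost γ P z' + dist z z' := by
  have := linkWeight_le_add_dist γ (P (Fin.last n)) z z'
  rw [chainCost, chainCost]
  linarith

lemma chainCost_snoc (γ : ℝ) {n : ℕ} (P : Fin (n + 1) → Mt M) (q : Mt M) (z : M) :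
    chainCost γ (Fin.snoc P q : Fin (n + 2) → Mt M) z =
      chainCost γ P q.1.2 + linkWeight γ q z := by
  simp only [chainCost, Fin.sum_univ_castSucc (n := n), Fin.snoc_last, Fin.succ_last,
    Fin.succ_castSucc, Fin.snoc_castSucc]

lemma GammaCM.chainCost_nonneg {γ : ℝ} {B : Set (Mt M)} (hB : GammaCM γ B) {n : ℕ}
    {P : Fin (n + 1) → Mt M} (hP : ∀ i, P i ∈ B) : 0 ≤ chainCost γ P (P 0).1.2 := by
  simpa only [chainCost, linkWeight, Fin.sum_univ_castSucc, Fin.last_add_one, Fin.coeSucc_eq_succ]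
    using hB n P hP

structure Chain {α : Type*} (B : Set α) (p : α) where
  len : ℕ
  pt : Fin (len + 1) → α
  pt_zero : pt 0 = p
  pt_mem : ∀ i, pt i ∈ B

namespace Chain

variable {α : Type*} {B : Set α} {p : α}

lemma nonempty (hp : p ∈ B) : Nonempty (Chain B p) := ⟨⟨0, fun _ => p, rfl, fun _ => hp⟩⟩

def snoc (c : Chain B p) (q : α) (hq : q ∈ B) : Chain B p where
  len := c.len + 1
  pt := Fin.snoc c.pt q
  pt_zero := by simpa using c.pt_zero
  pt_mem i := i.lastCases (by simpa using hq) fun j => by simpa using c.pt_mem j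

end Chain

/-- Rockafellar's potential of `B` anchored at `p`. -/
noncomputable def chainPotential (γ : ℝ) (B : Set (Mt M)) (p : Mt M) (z : M) : ℝ :=
  ⨅ c : Chain B p, chainCost γ c.pt z

section chainPotential

variable {γ : ℝ} {B : Set (Mt M)} {p : Mt M}

lemma GammaCM.neg_dist_le_chainCost (hB : GammaCM γ B) (c : Chain B p) (z : M) :
    -dist z p.1.2 ≤ chainCost γ c.pt z := by
  have hcycle := hB.chainCost_nonneg c.pt_mem
  rw [c.pt_zero] at hcycle
  linarith [chainCost_le_add_dist γ c.pt p.1.2 z, dist_comm z p.1.2]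

lemma GammaCM.bddBelow_chainCost (hB : GammaCM γ B) (z : M) :
    BddBelow (Set.range fun c : Chain B p => chainCost γ c.pt z) :=
  ⟨-dist z p.1.2, Set.forall_mem_range.2 fun c => hB.neg_dist_le_chainCost c z⟩

lemma GammaCM.chainPotential_le_add_dist (hB : GammaCM γ B) (hp : p ∈ B) (z z' : M) :
    chainPotential γ B p z ≤ chainPotential γ B p z' + dist z z' := by
  have : Nonempty (Chain B p) := Chain.nonempty hp
  rw [← sub_le_iff_le_add]
  refine le_ciInf fun c => sub_le_iff_le_add.2 ?_
  exact (ciInf_le (hB.bddBelow_chainCost z) c).trans (chainCost_le_add_dist γ c.pt z z')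

lemma GammaCM.chainPotential_add_le (hB : GammaCM γ B) (hp : p ∈ B) {q : Mt M} (hq : q ∈ B) :
    chainPotential γ B p q.1.1 + γ * dist q.1.1 q.1.2 ≤ chainPotential γ B p q.1.2 := by
  have : Nonempty (Chain B p) := Chain.nonempty hp
  suffices ∀ c : Chain B p,
      chainPotential γ B p q.1.1 + γ * dist q.1.1 q.1.2 ≤ chainCost γ c.pt q.1.2 from
    le_ciInf this
  intro c
  have hsnoc : chainPotential γ B p q.1.1 ≤ chainCost γ (c.snoc q hq).pt q.1.1 :=
    ciInf_le (hB.bddBelow_chainCost q.1.1) _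
  simp only [Chain.snoc, chainCost_snoc] at hsnoc
  linarith [linkWeight_fst_le γ q]

theorem GammaCM.exists_lipschitz_potential (hB : GammaCM γ B) :
    ∃ h : M → ℝ, LipschitzWith 1 h ∧
      ∀ q ∈ B, h q.1.1 + γ * dist q.1.1 q.1.2 ≤ h q.1.2 := by
  rcases B.eq_empty_or_nonempty with rfl | ⟨p, hp⟩
  · exact ⟨0, LipschitzWith.of_le_add fun _ _ => by simp, by simp⟩
  exact ⟨chainPotential γ B p, LipschitzWith.of_le_add (hB.chainPotential_le_add_dist hp),
    fun q hq => hB.chainPotential_add_le hp hq⟩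

end chainPotential

lemma LipschitzWith.sub_le_dist {α : Type*} [PseudoMetricSpace α] {f : α → ℝ}
    (hf : LipschitzWith 1 f) (x y : α) : f x - f y ≤ dist x y :=
  sub_le_iff_le_add'.2 (by simpa using hf.le_add_mul x y)

lemma le_mQ_iff {γ : ℝ} {f : M → ℝ} {p : Mt M} :
    γ ≤ mQ f p ↔ γ * dist p.1.1 p.1.2 ≤ f p.1.1 - f p.1.2 :=
  le_div_iff₀ (dist_pos.2 p.2)

lemma sub_le_linkWeight {γ : ℝ} {f : M → ℝ} (hf : LipschitzWith 1 f) {q : Mt M}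
    (hq : γ * dist q.1.1 q.1.2 ≤ f q.1.1 - f q.1.2) (c : M) :
    f q.1.2 - f c ≤ linkWeight γ q c :=
  le_min (by linarith [hf.sub_le_dist q.1.1 c]) (hf.sub_le_dist q.1.2 c)

lemma sub_le_linkWeight_add_linkWeight {γ : ℝ} {f : M → ℝ} (hf : LipschitzWith 1 f)
    {q : Mt M} (hq : γ * dist q.1.1 q.1.2 ≤ f q.1.1 - f q.1.2) {u v : M} (huv : u ≠ v) {c : M}
    (hfst : f q.1.1 - f c + γ * dist u v ≤ dist c u + dist q.1.1 v)
    (hsnd : f q.1.2 - f c + γ * dist u v ≤ dist c u + dist q.1.2 v) :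
    f q.1.2 - f c ≤ linkWeight γ q v + linkWeight γ (pr u v huv) c := by
  have h₁ := (hf.sub_le_dist q.1.1 c).trans (dist_triangle q.1.1 v c)
  have h₂ := (hf.sub_le_dist q.1.2 c).trans (dist_triangle q.1.2 v c)
  have hcu := dist_comm c u
  simp only [linkWeight, pr]
  rcases min_cases (dist q.1.1 v - γ * dist q.1.1 q.1.2) (dist q.1.2 v) with
    ⟨hm, -⟩ | ⟨hm, -⟩ <;>
  rcases min_cases (dist u c - γ * dist u v) (dist v c) with ⟨hm', -⟩ | ⟨hm', -⟩ <;>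
  rw [hm, hm'] <;> linarith

theorem gammaCM_insert_of_lipschitz {γ : ℝ} (hγ : γ ≤ 1) {A : Set (Mt M)} {u v : M}
    (huv : u ≠ v) {f : M → ℝ} (hf : LipschitzWith 1 f)
    (hA : ∀ q ∈ A, γ * dist q.1.1 q.1.2 ≤ f q.1.1 - f q.1.2)
    (hπ : ∀ x ∈ piA A, ∀ y ∈ piA A, f y - f x + γ * dist u v ≤ dist x u + dist y v) :
    GammaCM γ (insert (pr u v huv) A) := by
  classical
  have fst_mem : ∀ q ∈ A, q.1.1 ∈ piA A := fun q hq => ⟨q, hq, Or.inl rfl⟩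
  have snd_mem : ∀ q ∈ A, q.1.2 ∈ piA A := fun q hq => ⟨q, hq, Or.inr rfl⟩
  have lower_le_upper : ∀ q ∈ A, ∀ c ∈ piA A,
      f q.1.2 - linkWeight γ q v ≤ f c + linkWeight γ (pr u v huv) c := fun q hq c hc => by
    have := sub_le_linkWeight_add_linkWeight hf (hA q hq) huv
      (hπ c hc _ (fst_mem q hq)) (hπ c hc _ (snd_mem q hq))
    linarith
  -- the least value at `v` compatible with the links into `v`
  set t := ⨆ q : A, (f q.1.1.2 - linkWeight γ q v)
  have le_t : ∀ q ∈ A, f q.1.2 - linkWeight γ q v ≤ t := fun q hq =>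
    le_ciSup (f := fun q : A => f q.1.1.2 - linkWeight γ q v)
      ⟨_, Set.forall_mem_range.2 fun q' => lower_le_upper q'.1 q'.2 _ (snd_mem q hq)⟩
      ⟨q, hq⟩
  have t_le : ∀ c ∈ piA A, t ≤ f c + linkWeight γ (pr u v huv) c := fun c hc => by
    have : Nonempty A := let ⟨q, hq, _⟩ := hc; ⟨⟨q, hq⟩⟩
    exact ciSup_le fun q' => lower_le_upper q'.1 q'.2 c hc
  have h₀ : linkWeight γ (pr u v huv) v = 0 := linkWeight_snd hγ _
  set g := Function.update f v t
  have g_snd_le : ∀ q ∈ A, g q.1.2 ≤ f q.1.2 := fun q hq => by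
    by_cases hv : q.1.2 = v
    · simpa [g, hv, h₀] using t_le v (hv ▸ snd_mem q hq)
    · simp [g, hv]
  apply gammaCM_of_sub_le_linkWeight g
  rintro q hq q' hq'
  by_cases hv : q'.1.2 = v
  · rw [hv, show g v = t from Function.update_self ..]
    rcases hq with hq | hq
    · rw [hq, h₀]
      exact sub_nonpos.2 (Function.update_self v t f).le
    · linarith [g_snd_le q hq, le_t q hq]
  · have hq'A : q' ∈ A := hq'.resolve_left fun h => hv (h ▸ rfl)
    rw [show g q'.1.2 = f q'.1.2 from Function.update_of_ne hv ..]
    rcases hq with hq | hq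
    · rw [hq]
      exact sub_le_iff_le_add'.2 ((Function.update_self v t f).le.trans (t_le _ (snd_mem q' hq'A)))
    · linarith [g_snd_le q hq, sub_le_linkWeight hf (hA q hq) q'.1.2]

theorem stmt8_general (base : M) {γ : ℝ} (hγ1 : γ ≤ 1)
    (A : Set (Mt M)) (u v : M) (huv : u ≠ v) :
    GammaCM γ (insert (pr u v huv) A) ↔
      ∃ f : M → ℝ, f base = 0 ∧ LipschitzWith 1 f ∧
        (∀ p ∈ A, γ ≤ mQ f p) ∧
        ∀ x ∈ piA A, ∀ y ∈ piA A,
          f y - f x + γ * dist u v ≤ dist x u + dist y v := by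
  constructor
  · intro hB
    obtain ⟨h, hh, hpot⟩ := hB.exists_lipschitz_potential
    have huv' : h u + γ * dist u v ≤ h v := hpot _ (Set.mem_insert _ _)
    refine ⟨fun z => h base - h z, sub_self _, ?_, fun p hp => le_mQ_iff.2 ?_,
      fun x _ y _ => ?_⟩
    · exact LipschitzWith.of_le_add fun x y => by linarith [hh.sub_le_dist y x, dist_comm x y]
    · linarith [hpot p (Set.mem_insert_of_mem _ hp)]
    · dsimp only
      linarith [hh.sub_le_dist x u, hh.sub_le_dist v y, dist_comm v y]
  · rintro ⟨f, -, hf, hA, hπ⟩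
    exact gammaCM_insert_of_lipschitz hγ1 huv hf (fun q hq => le_mQ_iff.1 (hA q hq)) hπ

theorem stmt8 (base : M) {γ : ℝ} (hγ0 : 0 < γ) (hγ1 : γ ≤ 1)
    (A : Set (Mt M)) (u v : M) (huv : u ≠ v) :
    GammaCM γ (insert (pr u v huv) A) ↔
      ∃ f : M → ℝ, f base = 0 ∧ LipschitzWith 1 f ∧
        (∀ p ∈ A, γ ≤ mQ f p) ∧
        ∀ x ∈ piA A, ∀ y ∈ piA A,
          f y - f x + γ * dist u v ≤ dist x u + dist y v :=
  stmt8_general base hγ1 A u v huv
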